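/- arXiv:1701.02690 — 2 statements merged into one kernel-verified Lean document; each statement's English description precedes it below -/
import Mathlib

section
/- Let V_c be an N×r complex matrix satisfying A V_c = V_c J_r(λ) with ‖V_c‖₁ = 1. Then the graph total variation is bounded as TV_G(V_c) = ‖V_c − A V_c‖₁ ≤ |1−λ| + 1. (Theorem 4.) -/
/-!
Since `A V_c = V_c J_r(λ)`, we have `V_c − A V_c = V_c (1 − J_r(λ))`. The induced L1 norm is the
L∞ operator norm of the transpose, hence submultiplicative, so `TV_G(V_c) ≤ ‖1 − J_r(λ)‖₁`.
Finally `1 − J_r(λ) = (1 − λ) 1 − J_r(0)`, and every column of the shift `J_r(0)` holds at most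
one `1`.
-/

open Matrix

/-- The `r × r` Jordan block `J_r(μ)`: upper triangular with `μ` on the diagonal,
`1` on the superdiagonal, and `0` elsewhere. -/
def jordanBlock (r : ℕ) (μ : ℂ) : Matrix (Fin r) (Fin r) ℂ :=
  Matrix.of fun i j => if (i : ℕ) = (j : ℕ) then μ
    else if (i : ℕ) + 1 = (j : ℕ) then 1 else 0

/-- The induced L1 matrix norm: the maximum absolute column sum. -/
noncomputable def matL1 {m n : Type*} [Fintype m] [Fintype n]
    (M : Matrix m n ℂ) : ℝ :=
  ⨆ j : n, ∑ i : m, ‖M i j‖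

attribute [local instance] Matrix.linftyOpNormedAddCommGroup

section matL1

variable {l m n : Type*} [Fintype l] [Fintype m] [Fintype n]

theorem matL1_eq_norm_transpose (M : Matrix m n ℂ) : matL1 M = ‖Mᵀ‖ := by
  rw [linfty_opNorm_def, Finset.sup_univ_eq_ciSup, NNReal.coe_iSup, matL1]
  push_cast
  rfl

theorem matL1_mul_le (X : Matrix l m ℂ) (Y : Matrix m n ℂ) :
    matL1 (X * Y) ≤ matL1 X * matL1 Y := by
  simpa only [matL1_eq_norm_transpose, transpose_mul, mul_comm (‖Xᵀ‖)]
    using linfty_opNorm_mul Yᵀ Xᵀ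

theorem matL1_sub_le (X Y : Matrix m n ℂ) : matL1 (X - Y) ≤ matL1 X + matL1 Y := by
  simpa only [matL1_eq_norm_transpose, transpose_sub] using norm_sub_le Xᵀ Yᵀ

theorem matL1_diagonal [DecidableEq n] (v : n → ℂ) : matL1 (diagonal v) = ‖v‖ := by
  rw [matL1_eq_norm_transpose, diagonal_transpose, linfty_opNorm_diagonal]

end matL1

theorem jordanBlock_eq_diagonal_add (r : ℕ) (μ : ℂ) :
    jordanBlock r μ = diagonal (fun _ => μ) + jordanBlock r 0 := by
  ext i j
  by_cases h : i = j
  · simp [jordanBlock, h]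
  · simp [jordanBlock, h, Fin.val_ne_of_ne h]

theorem matL1_jordanBlock_zero_le_one (r : ℕ) : matL1 (jordanBlock r 0) ≤ 1 := by
  refine Real.iSup_le (fun j => ?_) zero_le_one
  have hcol : ∀ i : Fin r, ‖jordanBlock r 0 i j‖ = if (i : ℕ) + 1 = j then 1 else 0 := by
    intro i
    by_cases h : (i : ℕ) = j <;> simp [jordanBlock, h, apply_ite]
  have hcard : (Finset.univ.filter fun i : Fin r => (i : ℕ) + 1 = j).card ≤ 1 :=
    Finset.card_le_one.mpr fun a ha b hb => by
      simp only [Finset.mem_filter] at ha hb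
      exact Fin.ext (Nat.succ_injective (ha.2.trans hb.2.symm))
  simp only [hcol, Finset.sum_boole]
  exact_mod_cast hcard

theorem matL1_one_sub_jordanBlock_le (r : ℕ) (μ : ℂ) :
    matL1 (1 - jordanBlock r μ) ≤ ‖1 - μ‖ + 1 := by
  have hsplit : 1 - jordanBlock r μ = diagonal (fun _ => 1 - μ) - jordanBlock r 0 := by
    rw [jordanBlock_eq_diagonal_add, ← diagonal_one, sub_add_eq_sub_sub, diagonal_sub]
  calc matL1 (1 - jordanBlock r μ)
      ≤ matL1 (diagonal fun _ : Fin r => 1 - μ) + matL1 (jordanBlock r 0) :=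
        hsplit ▸ matL1_sub_le _ _
    _ ≤ ‖1 - μ‖ + 1 := by
        rw [matL1_diagonal]
        exact add_le_add (pi_norm_const_le _) (matL1_jordanBlock_zero_le_one r)

/-- Theorem 4: if `A V_c = V_c J_r(μ)` and `‖V_c‖₁ = 1`, then the graph total
variation satisfies `TV_G(V_c) = ‖V_c − A V_c‖₁ ≤ |1−μ| + 1`. -/
theorem tv_upper_bound {N r : ℕ} (A : Matrix (Fin N) (Fin N) ℂ) (μ : ℂ)
    (Vc : Matrix (Fin N) (Fin r) ℂ)
    (hchain : A * Vc = Vc * jordanBlock r μ)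
    (hnorm : matL1 Vc = 1) :
    matL1 (Vc - A * Vc) ≤ ‖1 - μ‖ + 1 := by
  calc matL1 (Vc - A * Vc) = matL1 (Vc * (1 - jordanBlock r μ)) := by
        rw [hchain, Matrix.mul_sub, Matrix.mul_one]
    _ ≤ matL1 Vc * matL1 (1 - jordanBlock r μ) := matL1_mul_le _ _
    _ ≤ ‖1 - μ‖ + 1 := by
        rw [hnorm, one_mul]
        exact matL1_one_sub_jordanBlock_le r μ
end

section
/- The spectral projections are coordinate free: let V and X be invertible N×N complex matrices, let B_1,…,B_m be a partition of the column index set {1,…,N}, and suppose that for every j the span of the columns of V indexed by B_j equals the span of the columns of X indexed by B_j. Then for every j, V E_{B_j} V^{-1} = X E_{B_j} X^{-1}; consequently the graph Fourier transform components ŝ_{ij} = P_{B_j} s of any signal s ∈ ℂ^N do not depend on the choice of Jordan basis spanning the Jordan subspaces. -/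
open Matrix

/-- The diagonal 0/1 indicator matrix `E_B` of a set `B` of column indices. -/
def eMat {N : ℕ} (B : Finset (Fin N)) : Matrix (Fin N) (Fin N) ℂ :=
  Matrix.diagonal fun j => if j ∈ B then (1 : ℂ) else 0

/-- The span of the columns of `V` indexed by `B`. -/
noncomputable def colSpan {N : ℕ} (V : Matrix (Fin N) (Fin N) ℂ) (B : Finset (Fin N)) :
    Submodule ℂ (Fin N → ℂ) :=
  Submodule.span ℂ ((fun k => fun i => V i k) '' (B : Set (Fin N)))

lemma mulVec_col' {N : ℕ} (M X : Matrix (Fin N) (Fin N) ℂ) (k : Fin N) :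
    M *ᵥ (fun i => X i k) = fun i => (M * X) i k := by
  ext i; simp [Matrix.mulVec, Matrix.mul_apply, dotProduct]

lemma proj_col' {N : ℕ} (V : Matrix (Fin N) (Fin N) ℂ) (hV : IsUnit V.det)
    (Bs : Finset (Fin N)) (k : Fin N) (i : Fin N) :
    ((V * eMat Bs * V⁻¹) *ᵥ (fun i => V i k)) i = if k ∈ Bs then V i k else 0 := by
  rw [mulVec_col']
  have h1 : (V * eMat Bs * V⁻¹) * V = V * eMat Bs := by
    rw [Matrix.mul_assoc, Matrix.nonsing_inv_mul V hV, Matrix.mul_one]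
  rw [h1]
  simp only [eMat, Matrix.mul_diagonal]
  split <;> simp

lemma proj_fix' {N : ℕ} (V : Matrix (Fin N) (Fin N) ℂ) (hV : IsUnit V.det)
    (Bs : Finset (Fin N)) : ∀ x ∈ colSpan V Bs, (V * eMat Bs * V⁻¹) *ᵥ x = x := by
  intro x hx
  induction hx using Submodule.span_induction with
  | mem x hx =>
    obtain ⟨k, hk, rfl⟩ := hx
    ext i
    rw [proj_col' V hV]
    simp [Finset.mem_coe.mp hk]
  | zero => simp
  | add x y _ _ hx hy => rw [Matrix.mulVec_add, hx, hy]
  | smul c x _ hx => rw [Matrix.mulVec_smul, hx]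

lemma proj_kill' {N : ℕ} (V : Matrix (Fin N) (Fin N) ℂ) (hV : IsUnit V.det)
    (Bs Cs : Finset (Fin N)) (hd : Disjoint Bs Cs) :
    ∀ x ∈ colSpan V Cs, (V * eMat Bs * V⁻¹) *ᵥ x = 0 := by
  intro x hx
  induction hx using Submodule.span_induction with
  | mem x hx =>
    obtain ⟨k, hk, rfl⟩ := hx
    ext i
    rw [proj_col' V hV]
    have : k ∉ Bs := fun hkB => (Finset.disjoint_left.mp hd hkB) (Finset.mem_coe.mp hk)
    simp [this]
  | zero => simp
  | add x y _ _ hx hy => rw [Matrix.mulVec_add, hx, hy]; simp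
  | smul c x _ hx => rw [Matrix.mulVec_smul, hx]; simp

/-- The spectral projections are coordinate free: if `V` and `X` are invertible and, for
a partition `B_1, …, B_m` of the column index set, the columns of `V` indexed by `B_j`
span the same subspace as the columns of `X` indexed by `B_j` for every `j`, then
`V E_{B_j} V⁻¹ = X E_{B_j} X⁻¹` for every `j`; consequently the graph Fourier transform
components `ŝ_j = P_{B_j} s` of any signal `s` do not depend on the choice of Jordan
basis spanning the Jordan subspaces. -/
theorem spectral_projections_coordinate_free {N : ℕ} (hN : 0 < N)
    (V X : Matrix (Fin N) (Fin N) ℂ)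
    (hV : IsUnit V.det) (hX : IsUnit X.det)
    (m : ℕ) (B : Fin m → Finset (Fin N))
    (hdisj : Pairwise (Function.onFun Disjoint B))
    (hcover : Finset.univ.biUnion B = Finset.univ)
    (hspan : ∀ j : Fin m, colSpan V (B j) = colSpan X (B j)) :
    (∀ j : Fin m, V * eMat (B j) * V⁻¹ = X * eMat (B j) * X⁻¹) ∧
    (∀ s : Fin N → ℂ, ∀ j : Fin m,
      (V * eMat (B j) * V⁻¹) *ᵥ s = (X * eMat (B j) * X⁻¹) *ᵥ s) := by
  have main : ∀ j : Fin m, V * eMat (B j) * V⁻¹ = X * eMat (B j) * X⁻¹ := by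
    intro j
    have hMX : (V * eMat (B j) * V⁻¹) * X = X * eMat (B j) := by
      ext i k
      -- find the block containing k
      have hk : k ∈ Finset.univ.biUnion B := by rw [hcover]; exact Finset.mem_univ k
      obtain ⟨j', _, hkj'⟩ := Finset.mem_biUnion.mp hk
      have hcol : (fun i => X i k) ∈ colSpan V (B j') := by
        rw [hspan j']
        exact Submodule.subset_span ⟨k, hkj', rfl⟩
      have hentry : ((V * eMat (B j) * V⁻¹) *ᵥ (fun i => X i k)) i
          = ((V * eMat (B j) * V⁻¹) * X) i k := by rw [mulVec_col']
      by_cases hjj : j' = j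
      · subst hjj
        have := proj_fix' V hV (B j') _ hcol
        have h2 : ((V * eMat (B j') * V⁻¹) * X) i k = X i k := by
          rw [← hentry, this]
        rw [h2]
        simp [eMat, Matrix.mul_diagonal, hkj']
      · have hd : Disjoint (B j) (B j') := hdisj (Ne.symm hjj)
        have := proj_kill' V hV (B j) (B j') hd _ hcol
        have h2 : ((V * eMat (B j) * V⁻¹) * X) i k = 0 := by
          rw [← hentry, this]; rfl
        rw [h2]
        have : k ∉ B j := fun hkB => (Finset.disjoint_left.mp hd hkB) hkj'
        simp [eMat, Matrix.mul_diagonal, this]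
    have : X * eMat (B j) * X⁻¹ = V * eMat (B j) * V⁻¹ := by
      rw [← hMX, Matrix.mul_assoc (V * eMat (B j) * V⁻¹), Matrix.mul_nonsing_inv X hX,
        Matrix.mul_one]
    exact this.symm
  exact ⟨main, fun s j => by rw [main j]⟩
end
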